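/- arXiv:1101.0478 — 4 statements merged into one kernel-verified Lean document; each statement's English description precedes it below -/
import Mathlib

section
/- There exists a constant C > 0 such that for every measurable set E ⊆ [1,∞) one has ∫₁^∞ e^{−2ρt} ( ∫_{E ∩ {r : |t−r| ≥ 1}} e^{−ρr} Δ(r) |t−r|^{−1} dr )² Δ(t) dt ≤ C · μ(E)². -/
/-!
On `[0, ∞)` one has `Δ(t) ≤ 2^(2β+1) e^(2ρt)`, so the outer weight `e^(-2ρt) Δ(t)` is bounded.
The inner integral is at most the convolution `(g ∗ k)(t)` of `g = 1_E e^(-ρr) Δ(r)` with the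
kernel `k(u) = 1_{|u| ≥ 1} |u|⁻¹`, which is square integrable since `k(u)² ≤ 2 / (1 + u²)`.
Young's inequality `‖g ∗ k‖₂ ≤ ‖k‖₂ ‖g‖₁` and `‖g‖₁ ≤ μ(E)` (as `e^(-ρr) ≤ 1`) finish the proof.
-/

open MeasureTheory Real Set

/-- The Jacobi weight `Δ(t) = (2 sinh t)^(2α+1) (2 cosh t)^(2β+1)`. -/
noncomputable def Δj (α β : ℝ) (t : ℝ) : ℝ :=
  (2 * Real.sinh t) ^ (2 * α + 1) * (2 * Real.cosh t) ^ (2 * β + 1)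

/-- The measure `dμ = Δ(t) dt`. -/
noncomputable def μj (α β : ℝ) : Measure ℝ :=
  MeasureTheory.volume.withDensity fun t => ENNReal.ofReal (Δj α β t)

open scoped ENNReal

theorem lintegral_mul_sq_le {α : Type*} [MeasurableSpace α] {μ : Measure α} {f g : α → ℝ≥0∞}
    (hf : AEMeasurable f μ) (hg : AEMeasurable g μ) :
    (∫⁻ a, f a * g a ∂μ) ^ 2 ≤ (∫⁻ a, f a ∂μ) * ∫⁻ a, f a * g a ^ 2 ∂μ := by
  have hsqrt : ∀ x : ℝ≥0∞, (x ^ 2) ^ (2⁻¹ : ℝ) = x := by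
    simpa using ENNReal.pow_rpow_inv_natCast (n := 2) two_ne_zero
  have hholder := ENNReal.lintegral_mul_norm_pow_le hf (hf.mul (hg.pow_const 2))
    (p := 2⁻¹) (q := 2⁻¹) (by norm_num) (by norm_num) (by norm_num)
  have hpt : ∀ a, f a ^ (2⁻¹ : ℝ) * (f a * g a ^ 2) ^ (2⁻¹ : ℝ) = f a * g a := fun a => by
    rw [← ENNReal.mul_rpow_of_nonneg _ _ (by norm_num), ← hsqrt (f a * g a)]
    ring_nf
  simp only [Pi.mul_apply, hpt] at hholder
  calc (∫⁻ a, f a * g a ∂μ) ^ 2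
      ≤ ((∫⁻ a, f a ∂μ) ^ (2⁻¹ : ℝ) * (∫⁻ a, f a * g a ^ 2 ∂μ) ^ (2⁻¹ : ℝ)) ^ 2 := by
        gcongr
    _ = (∫⁻ a, f a ∂μ) * ∫⁻ a, f a * g a ^ 2 ∂μ := by
        rw [← ENNReal.mul_rpow_of_nonneg _ _ (by norm_num)]
        simpa using ENNReal.rpow_inv_natCast_pow (n := 2) two_ne_zero _

theorem lintegral_conv_sq_le {G : Type*} [MeasurableSpace G] [AddGroup G] [MeasurableAdd G]
    [MeasurableSub₂ G] {μ : Measure G} [SFinite μ] [μ.IsAddRightInvariant]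
    {g k : G → ℝ≥0∞} (hg : Measurable g) (hk : Measurable k) :
    ∫⁻ t, (∫⁻ r, g r * k (t - r) ∂μ) ^ 2 ∂μ ≤ (∫⁻ u, k u ^ 2 ∂μ) * (∫⁻ r, g r ∂μ) ^ 2 := by
  have hk_sub : Measurable fun p : G × G => k (p.1 - p.2) := hk.comp measurable_sub
  have hprod : Measurable fun p : G × G => g p.2 * k (p.1 - p.2) ^ 2 :=
    (hg.comp measurable_snd).mul (hk_sub.pow_const 2)
  calc ∫⁻ t, (∫⁻ r, g r * k (t - r) ∂μ) ^ 2 ∂μ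
      ≤ ∫⁻ t, (∫⁻ r, g r ∂μ) * ∫⁻ r, g r * k (t - r) ^ 2 ∂μ ∂μ :=
        lintegral_mono fun t => lintegral_mul_sq_le hg.aemeasurable
          (hk.comp (measurable_const.sub measurable_id)).aemeasurable
    _ = (∫⁻ r, g r ∂μ) * ∫⁻ r, g r * ∫⁻ t, k (t - r) ^ 2 ∂μ ∂μ := by
        rw [lintegral_const_mul _ hprod.lintegral_prod_right',
          lintegral_lintegral_swap hprod.aemeasurable]
        dsimp only
        congr 1
        exact lintegral_congr fun r =>
          lintegral_const_mul (f := fun t => k (t - r) ^ 2) _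
            ((hk.comp (measurable_sub_const r)).pow_const 2)
    _ = (∫⁻ u, k u ^ 2 ∂μ) * (∫⁻ r, g r ∂μ) ^ 2 := by
        simp_rw [lintegral_sub_right_eq_self (fun u => k u ^ 2), lintegral_mul_const _ hg]
        ring

noncomputable def truncInvKernel (u : ℝ) : ℝ≥0∞ :=
  {u : ℝ | 1 ≤ |u|}.indicator (fun u => ENNReal.ofReal |u|⁻¹) u

theorem measurable_truncInvKernel : Measurable truncInvKernel :=
  (measurable_abs.inv.ennreal_ofReal).indicator (measurableSet_le measurable_const measurable_abs)

theorem truncInvKernel_sq_le (u : ℝ) :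
    truncInvKernel u ^ 2 ≤ ENNReal.ofReal (2 * (1 + u ^ 2)⁻¹) := by
  unfold truncInvKernel
  by_cases hu : 1 ≤ |u|
  · rw [indicator_of_mem (show u ∈ {u : ℝ | 1 ≤ |u|} from hu),
      ← ENNReal.ofReal_pow (by positivity)]
    refine ENNReal.ofReal_le_ofReal ?_
    have hu2 : 1 ≤ u ^ 2 := by nlinarith [sq_abs u]
    rw [inv_pow, sq_abs, ← div_eq_mul_inv, inv_eq_one_div,
      div_le_div_iff₀ (by positivity) (by positivity)]
    linarith
  · simp [indicator_of_notMem (show u ∉ {u : ℝ | 1 ≤ |u|} from hu)]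

theorem lintegral_truncInvKernel_sq_le :
    ∫⁻ u, truncInvKernel u ^ 2 ≤ ENNReal.ofReal (2 * π) := by
  calc ∫⁻ u, truncInvKernel u ^ 2 ≤ ∫⁻ u, ENNReal.ofReal (2 * (1 + u ^ 2)⁻¹) :=
        lintegral_mono truncInvKernel_sq_le
    _ = ENNReal.ofReal (2 * π) := by
        rw [← ofReal_integral_eq_lintegral_ofReal (integrable_inv_one_add_sq.const_mul 2)
          (ae_of_all _ fun u => by positivity), integral_const_mul, integral_univ_inv_one_add_sq]

theorem setLIntegral_le_lintegral_indicator_mul_truncInvKernel {E : Set ℝ}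
    (hE : MeasurableSet E) (f : ℝ → ℝ) (t : ℝ) :
    ∫⁻ r in E ∩ {r : ℝ | 1 ≤ |t - r|}, ENNReal.ofReal (f r * |t - r|⁻¹) ≤
      ∫⁻ r, E.indicator (fun r => ENNReal.ofReal (f r)) r * truncInvKernel (t - r) := by
  refine (setLIntegral_mono' (hE.inter (measurableSet_le measurable_const (by fun_prop)))
    fun r ⟨hrE, hrt⟩ => ?_).trans (setLIntegral_le_lintegral _ _)
  rw [truncInvKernel, indicator_of_mem hrE,
    indicator_of_mem (show t - r ∈ {u : ℝ | 1 ≤ |u|} from hrt),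
    ← ENNReal.ofReal_mul' (by positivity)]

theorem measurable_Δj (α β : ℝ) : Measurable (Δj α β) := by
  unfold Δj
  fun_prop

theorem Δj_nonneg (α β : ℝ) {t : ℝ} (ht : 0 ≤ t) : 0 ≤ Δj α β t := by
  have := sinh_nonneg_iff.2 ht
  unfold Δj
  positivity

theorem Δj_le_mul_exp {α β t : ℝ} (hα : 0 ≤ 2 * α + 1) (hβ : 0 ≤ 2 * β + 1) (ht : 0 ≤ t) :
    Δj α β t ≤ 2 ^ (2 * β + 1) * exp (2 * (α + β + 1) * t) := by
  have hsinh : 0 ≤ 2 * sinh t := by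
    have := sinh_nonneg_iff.2 ht
    positivity
  have hs : 2 * sinh t ≤ exp t := by
    rw [sinh_eq]
    linarith [exp_pos (-t)]
  have hc : 2 * cosh t ≤ 2 * exp t := by
    rw [cosh_eq]
    linarith [exp_le_exp.2 (neg_le_self ht)]
  calc Δj α β t ≤ exp t ^ (2 * α + 1) * (2 * exp t) ^ (2 * β + 1) := by
        unfold Δj
        gcongr
    _ = 2 ^ (2 * β + 1) * exp (2 * (α + β + 1) * t) := by
        rw [mul_rpow zero_le_two (exp_pos t).le, ← exp_mul, ← exp_mul, mul_left_comm, ← exp_add]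
        ring_nf

theorem ofReal_exp_mul_ofReal_Δj_le {α β t : ℝ} (hα : 0 ≤ 2 * α + 1) (hβ : 0 ≤ 2 * β + 1)
    (ht : 0 ≤ t) :
    ENNReal.ofReal (exp (-2 * (α + β + 1) * t)) * ENNReal.ofReal (Δj α β t) ≤
      ENNReal.ofReal (2 ^ (2 * β + 1)) := by
  rw [← ENNReal.ofReal_mul (exp_pos _).le]
  refine ENNReal.ofReal_le_ofReal ?_
  calc exp (-2 * (α + β + 1) * t) * Δj α β t
      ≤ exp (-2 * (α + β + 1) * t) * (2 ^ (2 * β + 1) * exp (2 * (α + β + 1) * t)) := by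
        gcongr
        exact Δj_le_mul_exp hα hβ ht
    _ = 2 ^ (2 * β + 1) := by
        rw [mul_left_comm, ← exp_add]
        ring_nf
        simp

theorem lintegral_indicator_exp_mul_Δj_le_μj {α β : ℝ} (hρ : 0 ≤ α + β + 1) {E : Set ℝ}
    (hE : MeasurableSet E) (hE0 : E ⊆ Ici 0) :
    ∫⁻ r, E.indicator (fun r => ENNReal.ofReal (exp (-(α + β + 1) * r) * Δj α β r)) r ≤
      μj α β E := by
  rw [lintegral_indicator hE, μj, withDensity_apply _ hE]
  refine setLIntegral_mono' hE fun r hr => ENNReal.ofReal_le_ofReal ?_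
  have hr : 0 ≤ r := hE0 hr
  exact mul_le_of_le_one_left (Δj_nonneg α β hr) (exp_le_one_iff.2 (by nlinarith))

theorem stmt1 (α β : ℝ) (hβα : β < α) (hβ : -(1/2 : ℝ) < β) :
    ∃ C : ℝ, 0 < C ∧
      ∀ E : Set ℝ, MeasurableSet E → E ⊆ Set.Ici 1 →
        (∫⁻ t in Set.Ici (1 : ℝ),
            ENNReal.ofReal (Real.exp (-2 * (α + β + 1) * t)) *
              (∫⁻ r in E ∩ {r : ℝ | 1 ≤ |t - r|},
                  ENNReal.ofReal (Real.exp (-(α + β + 1) * r) * Δj α β r * |t - r|⁻¹)) ^ 2 *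
              ENNReal.ofReal (Δj α β t)) ≤
          ENNReal.ofReal C * (μj α β E) ^ 2 := by
  have hα' : 0 ≤ 2 * α + 1 := by linarith
  have hβ' : 0 ≤ 2 * β + 1 := by linarith
  refine ⟨2 ^ (2 * β + 1) * (2 * π), by positivity, fun E hE hE1 => ?_⟩
  set f : ℝ → ℝ := fun r => exp (-(α + β + 1) * r) * Δj α β r
  set g : ℝ → ℝ≥0∞ := E.indicator fun r => ENNReal.ofReal (f r)
  have hg : Measurable g :=
    ((by fun_prop : Measurable fun r => exp (-(α + β + 1) * r)).mul
      (measurable_Δj α β)).ennreal_ofReal.indicator hE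
  calc _ ≤ ∫⁻ t in Ici (1 : ℝ), ENNReal.ofReal (2 ^ (2 * β + 1)) *
          (∫⁻ r, g r * truncInvKernel (t - r)) ^ 2 := by
        refine setLIntegral_mono' measurableSet_Ici fun t ht => ?_
        rw [mul_right_comm]
        exact mul_le_mul' (ofReal_exp_mul_ofReal_Δj_le hα' hβ' (zero_le_one.trans ht))
          (pow_le_pow_left' (setLIntegral_le_lintegral_indicator_mul_truncInvKernel hE f t) 2)
    _ ≤ ENNReal.ofReal (2 ^ (2 * β + 1)) * ∫⁻ t, (∫⁻ r, g r * truncInvKernel (t - r)) ^ 2 := by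
        rw [← lintegral_const_mul' _ _ ENNReal.ofReal_ne_top]
        exact setLIntegral_le_lintegral _ _
    _ ≤ ENNReal.ofReal (2 ^ (2 * β + 1)) * (ENNReal.ofReal (2 * π) * μj α β E ^ 2) := by
        gcongr
        refine (lintegral_conv_sq_le hg measurable_truncInvKernel).trans ?_
        gcongr
        · exact lintegral_truncInvKernel_sq_le
        · exact lintegral_indicator_exp_mul_Δj_le_μj (by linarith) hE
            (hE1.trans (Ici_subset_Ici.2 zero_le_one))
    _ = ENNReal.ofReal (2 ^ (2 * β + 1) * (2 * π)) * μj α β E ^ 2 := by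
        rw [ENNReal.ofReal_mul (p := 2 ^ (2 * β + 1)) (by positivity), mul_assoc]
end

section
/- There exist constants K > 0 and d > 0 such that |Γ_k(λ)| ≤ K · (1 + k)^d for all integers k ≥ 0 and all real λ. -/
/-!
Write `S k = ∑_{j ≤ k} ‖Γ_j(λ)‖` and `z = k + 1 - iλ`. Every coefficient `ρ + 2m - iλ` with
`m ≤ k` has norm at most `(‖ρ‖ + 3) ‖z‖`, because `‖z‖` dominates both `k + 1` and `|λ|`; so
dividing the recursion by `‖z‖` gives `(k + 1) ‖Γ_{k+1}‖ ≤ C S k` with `C` independent of `λ`.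
Hence `S (k + 1) ≤ (1 + C / (k + 1)) S k`, and Bernoulli's inequality
`(1 + 1/x)^d ≥ 1 + d/x` turns this into `S k ≤ (1 + k)^d` for `d = max C 1`.
-/

open Complex Finset

theorem rpow_mul_one_add_div_le_add_one_rpow {x d : ℝ} (hx : 0 < x) (hd : 1 ≤ d) :
    x ^ d * (1 + d / x) ≤ (x + 1) ^ d :=
  calc x ^ d * (1 + d / x) = x ^ d * (1 + d * x⁻¹) := by rw [div_eq_mul_inv]
    _ ≤ x ^ d * (1 + x⁻¹) ^ d := by
      gcongr
      exact one_add_mul_self_le_rpow_one_add (by linarith [inv_pos.2 hx]) hd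
    _ = (x + 1) ^ d := by
      rw [← Real.mul_rpow hx.le (by positivity), mul_add, mul_one, mul_inv_cancel₀ hx.ne']

theorem sum_range_le_rpow_of_succ_mul_le {u : ℕ → ℝ} {C d : ℝ} (hu : ∀ k, 0 ≤ u k)
    (hu0 : u 0 ≤ 1) (hCd : C ≤ d) (hd : 1 ≤ d)
    (hstep : ∀ k : ℕ, (k + 1) * u (k + 1) ≤ C * ∑ j ∈ range (k + 1), u j) (k : ℕ) :
    ∑ j ∈ range (k + 1), u j ≤ (1 + k : ℝ) ^ d := by
  induction k with
  | zero => simpa using hu0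
  | succ n ih =>
    set S := ∑ j ∈ range (n + 1), u j
    have hS : 0 ≤ S := sum_nonneg fun j _ => hu j
    have hn : (0 : ℝ) < n + 1 := by positivity
    have hun : u (n + 1) ≤ C * S / (n + 1) := by
      rw [le_div_iff₀ hn, mul_comm]; exact hstep n
    calc ∑ j ∈ range (n + 1 + 1), u j = S + u (n + 1) := sum_range_succ _ _
      _ ≤ S * (1 + d / (n + 1)) := by
        have : C * S / (n + 1) ≤ d * S / (n + 1) := by gcongr
        rw [mul_add, mul_one, mul_div_assoc', mul_comm S d]
        linarith
      _ ≤ (1 + n : ℝ) ^ d * (1 + d / (n + 1)) := by gcongr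
      _ ≤ (1 + (n + 1 : ℕ) : ℝ) ^ d := by
        rw [add_comm (1 : ℝ) n]
        convert rpow_mul_one_add_div_le_add_one_rpow hn hd using 2
        push_cast; ring

theorem sum_Icc_sub_two_mul_le_sum_range {f : ℕ → ℝ} (hf : ∀ k, 0 ≤ f k) (n : ℕ) :
    ∑ j ∈ Icc 1 (n / 2), f (n - 2 * j) ≤ ∑ j ∈ range n, f j := by
  have hinj : Set.InjOn (fun j => n - 2 * j) (Icc 1 (n / 2)) := by
    intro x hx y hy hxy
    simp only [coe_Icc, Set.mem_Icc] at hx hy hxy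
    omega
  rw [← sum_image hinj]
  refine sum_le_sum_of_subset_of_nonneg ?_ fun j _ _ => hf j
  intro m hm
  simp only [mem_image, mem_Icc] at hm
  obtain ⟨j, ⟨hj1, hj2⟩, rfl⟩ := hm
  rw [mem_range]
  omega

theorem norm_sum_mul_le {ι : Type*} {s : Finset ι} {c f : ι → ℂ} {M : ℝ}
    (hc : ∀ j ∈ s, ‖c j‖ ≤ M) : ‖∑ j ∈ s, c j * f j‖ ≤ M * ∑ j ∈ s, ‖f j‖ :=
  calc ‖∑ j ∈ s, c j * f j‖ ≤ ∑ j ∈ s, ‖c j * f j‖ := norm_sum_le _ _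
    _ ≤ ∑ j ∈ s, M * ‖f j‖ := by
      gcongr with j hj
      rw [norm_mul]
      exact mul_le_mul_of_nonneg_right (hc j hj) (norm_nonneg _)
    _ = M * ∑ j ∈ s, ‖f j‖ := (mul_sum _ _ _).symm

section Recurrence

variable (ρ : ℂ) (l : ℝ)

theorem natCast_add_one_le_norm_sub_I_mul (k : ℕ) : (k + 1 : ℝ) ≤ ‖(k : ℂ) + 1 - I * l‖ := by
  simpa [abs_of_nonneg (by positivity : (0 : ℝ) ≤ k + 1)] using
    abs_re_le_norm ((k : ℂ) + 1 - I * l)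

theorem abs_le_norm_natCast_add_one_sub_I_mul (k : ℕ) : |l| ≤ ‖(k : ℂ) + 1 - I * l‖ := by
  simpa using abs_im_le_norm ((k : ℂ) + 1 - I * l)

theorem norm_add_two_mul_sub_I_mul_le {m k : ℕ} (hmk : m ≤ k) :
    ‖ρ + 2 * (m : ℂ) - I * l‖ ≤ (‖ρ‖ + 3) * ‖(k : ℂ) + 1 - I * l‖ := by
  have hk := natCast_add_one_le_norm_sub_I_mul l k
  have hl := abs_le_norm_natCast_add_one_sub_I_mul l k
  have hm : (m : ℝ) ≤ k := by exact_mod_cast hmk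
  have hρ : ‖ρ‖ ≤ ‖ρ‖ * ‖(k : ℂ) + 1 - I * l‖ :=
    le_mul_of_one_le_right (norm_nonneg _) (by linarith [(k.cast_nonneg : (0 : ℝ) ≤ k)])
  calc ‖ρ + 2 * (m : ℂ) - I * l‖ ≤ ‖ρ‖ + ‖2 * (m : ℂ)‖ + ‖I * l‖ :=
        (norm_sub_le _ _).trans (by gcongr; exact norm_add_le _ _)
    _ = ‖ρ‖ + 2 * m + |l| := by simp
    _ ≤ _ := by linarith

variable {ρ l} (a b : ℂ) {g : ℕ → ℂ}

theorem succ_mul_norm_le_of_recurrence {k : ℕ}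
    (h : ((k : ℂ) + 1) * ((k : ℂ) + 1 - I * l) * g (k + 1) =
      a * ∑ j ∈ range (k + 1), (ρ + 2 * (j : ℂ) - I * l) * g j +
        b * ∑ j ∈ Icc 1 ((k + 1) / 2),
          (ρ + 2 * ((k + 1 - 2 * j : ℕ) : ℂ) - I * l) * g (k + 1 - 2 * j)) :
    (k + 1) * ‖g (k + 1)‖ ≤ (‖a‖ + ‖b‖) * (‖ρ‖ + 3) * ∑ j ∈ range (k + 1), ‖g j‖ := by
  set z := (k : ℂ) + 1 - I * l
  set S := ∑ j ∈ range (k + 1), ‖g j‖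
  have hz : 0 < ‖z‖ := lt_of_lt_of_le (by positivity) (natCast_add_one_le_norm_sub_I_mul l k)
  have hfull : ‖∑ j ∈ range (k + 1), (ρ + 2 * (j : ℂ) - I * l) * g j‖ ≤
      (‖ρ‖ + 3) * ‖z‖ * S :=
    norm_sum_mul_le fun j hj =>
      norm_add_two_mul_sub_I_mul_le ρ l (Nat.lt_succ_iff.mp (mem_range.mp hj))
  have hskip : ‖∑ j ∈ Icc 1 ((k + 1) / 2),
      (ρ + 2 * ((k + 1 - 2 * j : ℕ) : ℂ) - I * l) * g (k + 1 - 2 * j)‖ ≤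
      (‖ρ‖ + 3) * ‖z‖ * S :=
    (norm_sum_mul_le fun j hj => norm_add_two_mul_sub_I_mul_le ρ l (k := k)
      (by simp only [mem_Icc] at hj; omega)).trans
      (by gcongr; exact sum_Icc_sub_two_mul_le_sum_range (fun j => norm_nonneg (g j)) _)
  have hnorm : ‖((k : ℂ) + 1) * z * g (k + 1)‖ = (k + 1) * ‖g (k + 1)‖ * ‖z‖ := by
    rw [norm_mul, norm_mul, show ((k : ℂ) + 1) = ((k + 1 : ℕ) : ℂ) by push_cast; rfl,
      Complex.norm_natCast]
    push_cast; ring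
  refine le_of_mul_le_mul_right ?_ hz
  calc (k + 1) * ‖g (k + 1)‖ * ‖z‖ = ‖((k : ℂ) + 1) * z * g (k + 1)‖ := hnorm.symm
    _ ≤ ‖a‖ * ((‖ρ‖ + 3) * ‖z‖ * S) + ‖b‖ * ((‖ρ‖ + 3) * ‖z‖ * S) := by
      rw [h]
      refine (norm_add_le _ _).trans ?_
      rw [norm_mul, norm_mul]
      gcongr
    _ = (‖a‖ + ‖b‖) * (‖ρ‖ + 3) * S * ‖z‖ := by ring

end Recurrence

theorem stmt8_general (α β : ℝ)
    (G : ℕ → ℝ → ℂ) (h0 : ∀ l : ℝ, G 0 l = 1)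
    (hrec : ∀ (k : ℕ) (l : ℝ),
      ((k : ℂ) + 1) * ((k : ℂ) + 1 - Complex.I * l) * G (k + 1) l =
        ((α : ℂ) - (β : ℂ)) *
            ∑ j ∈ Finset.range (k + 1),
              (((α : ℂ) + (β : ℂ) + 1) + 2 * (j : ℂ) - Complex.I * l) * G j l +
          ((β : ℂ) + 1 / 2) *
            ∑ j ∈ Finset.Icc 1 ((k + 1) / 2),
              (((α : ℂ) + (β : ℂ) + 1) + 2 * ((k + 1 - 2 * j : ℕ) : ℂ) - Complex.I * l) *
                G (k + 1 - 2 * j) l) :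
    ∃ K : ℝ, 0 < K ∧ ∃ d : ℝ, 0 < d ∧
      ∀ (k : ℕ) (l : ℝ), ‖G k l‖ ≤ K * ((1 + k : ℝ)) ^ d := by
  set C := (‖(α : ℂ) - β‖ + ‖(β : ℂ) + 1 / 2‖) * (‖(α : ℂ) + β + 1‖ + 3)
  refine ⟨1, one_pos, max C 1, by positivity, fun k l => ?_⟩
  rw [one_mul]
  calc ‖G k l‖ ≤ ∑ j ∈ range (k + 1), ‖G j l‖ :=
        single_le_sum (fun j _ => norm_nonneg (G j l)) (self_mem_range_succ k)
    _ ≤ (1 + k : ℝ) ^ max C 1 :=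
      sum_range_le_rpow_of_succ_mul_le (fun j => norm_nonneg _) (by simp [h0]) (le_max_left _ _)
        (le_max_right _ _) (fun k => succ_mul_norm_le_of_recurrence _ _ (hrec k l)) k

theorem stmt8 (α β : ℝ) (hβα : β < α) (hβ : -(1/2 : ℝ) < β)
    (G : ℕ → ℝ → ℂ) (h0 : ∀ l : ℝ, G 0 l = 1)
    (hrec : ∀ (k : ℕ) (l : ℝ),
      ((k : ℂ) + 1) * ((k : ℂ) + 1 - Complex.I * l) * G (k + 1) l =
        ((α : ℂ) - (β : ℂ)) *
            ∑ j ∈ Finset.range (k + 1),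
              (((α : ℂ) + (β : ℂ) + 1) + 2 * (j : ℂ) - Complex.I * l) * G j l +
          ((β : ℂ) + 1 / 2) *
            ∑ j ∈ Finset.Icc 1 ((k + 1) / 2),
              (((α : ℂ) + (β : ℂ) + 1) + 2 * ((k + 1 - 2 * j : ℕ) : ℂ) - Complex.I * l) *
                G (k + 1 - 2 * j) l) :
    ∃ K : ℝ, 0 < K ∧ ∃ d : ℝ, 0 < d ∧
      ∀ (k : ℕ) (l : ℝ), ‖G k l‖ ≤ K * ((1 + k : ℝ)) ^ d :=
  stmt8_general α β G h0 hrec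
end

section
/- There exists a constant C > 0 such that for every measurable function f on (0,1] and every γ > 0: γ · μ({ t ∈ (0,1] : t^{−(α+1/2)} ∫₀^1 r^{−(α+1/2)} |f(r)| Δ(r) dr > γ })^{1/p₀} ≤ C · ∫₀^∞ μ({ r ∈ (0,1] : |f(r)| > s })^{1/p₀} ds. (The right-hand side is, up to a constant, the Lorentz L^{p₀,1}((0,1],dμ) norm of f, and the left-hand side is the weak-L^{p₀}(dμ) quasinorm of the dominating operator for the localized disc multiplier.) -/
open MeasureTheory Real Set

/-! With `g t = t ^ (-(α + 1/2))` and `I = ∫_{(0,1]} g |f| dμ`, the operator is `g · I`, and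
`dμ ≍ t ^ (2α+1) dt` on `(0,1]`. Markov's inequality gives `γ μ{g I > γ}^(1/p₀) ≤ ‖g‖_{p₀} I`,
and `‖g‖_{p₀}` is finite because `p₀ < p₁`. By the layer-cake formula it then suffices that
`∫_A g dμ ≲ μ(A)^(1/p₀)` for `A ⊆ (0,1]`: splitting `A` at the `a` with `a ^ (2α+2) = μ A`, the
part in `(0,a]` contributes `≲ a ^ (α+3/2)` and the rest at most `a ^ (-(α+1/2)) μ A`, and both
equal `μ(A)^(1/p₀)`. -/

open scoped ENNReal

section Abstract

variable {X : Type*} [MeasurableSpace X] {μ : Measure X}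

theorem mul_meas_lt_mul_rpow_le {g : X → ℝ≥0∞} (hg : Measurable g) (S : Set X) {p : ℝ}
    (hp : 0 < p) (γ I : ℝ≥0∞) :
    γ * μ {t | t ∈ S ∧ γ < g t * I} ^ (1 / p) ≤ (∫⁻ t in S, g t ^ p ∂μ) ^ (1 / p) * I := by
  have markov : γ ^ p * μ {t | t ∈ S ∧ γ < g t * I} ≤ (∫⁻ t in S, g t ^ p ∂μ) * I ^ p :=
    calc γ ^ p * μ {t | t ∈ S ∧ γ < g t * I}
        ≤ γ ^ p * μ.restrict S {t | γ ^ p ≤ (g t * I) ^ p} := by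
          gcongr γ ^ p * ?_
          refine (measure_mono fun t ht => ?_).trans (Measure.le_restrict_apply _ _)
          exact ⟨ENNReal.rpow_le_rpow ht.2.le hp.le, ht.1⟩
      _ ≤ ∫⁻ t in S, (g t * I) ^ p ∂μ := mul_meas_ge_le_lintegral (by fun_prop) _
      _ = (∫⁻ t in S, g t ^ p ∂μ) * I ^ p := by
          simp_rw [ENNReal.mul_rpow_of_nonneg _ _ hp.le]
          exact lintegral_mul_const _ (by fun_prop)
  have hp' : 0 ≤ 1 / p := by positivity
  calc γ * μ {t | t ∈ S ∧ γ < g t * I} ^ (1 / p)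
      = (γ ^ p * μ {t | t ∈ S ∧ γ < g t * I}) ^ (1 / p) := by
        rw [ENNReal.mul_rpow_of_nonneg _ _ hp', one_div, ENNReal.rpow_rpow_inv hp.ne']
    _ ≤ ((∫⁻ t in S, g t ^ p ∂μ) * I ^ p) ^ (1 / p) := ENNReal.rpow_le_rpow markov hp'
    _ = (∫⁻ t in S, g t ^ p ∂μ) ^ (1 / p) * I := by
        rw [ENNReal.mul_rpow_of_nonneg _ _ hp', one_div, ENNReal.rpow_rpow_inv hp.ne']

theorem setLIntegral_mul_le_mul_lintegral_measure_rpow {g : X → ℝ≥0∞} (hg : Measurable g)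
    {f : X → ℝ} (hf : Measurable f) {S : Set X} (hS : MeasurableSet S) {K : ℝ≥0∞} {q : ℝ}
    (hK : ∀ A ⊆ S, MeasurableSet A → ∫⁻ t in A, g t ∂μ ≤ K * μ A ^ q) :
    ∫⁻ t in S, g t * ENNReal.ofReal |f t| ∂μ
      ≤ K * ∫⁻ s in Ioi 0, μ {t | t ∈ S ∧ s < |f t|} ^ q := by
  set ν := (μ.restrict S).withDensity g
  have hlevel : ∀ s : ℝ, ν {t | s < |f t|} ≤ K * μ {t | t ∈ S ∧ s < |f t|} ^ q := by
    intro s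
    have hsuper : MeasurableSet {t | s < |f t|} := measurableSet_lt measurable_const hf.abs
    rw [withDensity_apply _ hsuper, Measure.restrict_restrict hsuper, inter_comm]
    exact hK _ (fun t ht => ht.1) (hS.inter hsuper)
  calc ∫⁻ t in S, g t * ENNReal.ofReal |f t| ∂μ
      = ∫⁻ t, ENNReal.ofReal |f t| ∂ν :=
        (lintegral_withDensity_eq_lintegral_mul _ hg (by fun_prop)).symm
    _ = ∫⁻ s in Ioi 0, ν {t | s < |f t|} :=
        lintegral_eq_lintegral_meas_lt ν (ae_of_all _ fun t => abs_nonneg _)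
          hf.abs.aemeasurable
    _ ≤ ∫⁻ s in Ioi 0, K * μ {t | t ∈ S ∧ s < |f t|} ^ q := lintegral_mono hlevel
    _ = K * ∫⁻ s in Ioi 0, μ {t | t ∈ S ∧ s < |f t|} ^ q := by
        refine lintegral_const_mul K ((Antitone.measurable ?_).pow_const q)
        exact fun s s' hss' => measure_mono fun t ht => ⟨ht.1, hss'.trans_lt ht.2⟩

end Abstract

theorem setLIntegral_le_setLIntegral_Ioc_add_mul {μ : Measure ℝ} {g : ℝ → ℝ≥0∞} {A : Set ℝ}
    (hA : A ⊆ Ioi 0) {a : ℝ} (hg : ∀ t, a < t → g t ≤ g a) :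
    ∫⁻ t in A, g t ∂μ ≤ ∫⁻ t in Ioc 0 a, g t ∂μ + g a * μ A := by
  have hsplit : A ⊆ Ioc 0 a ∪ (A ∩ Ioi a) := fun t ht =>
    (le_or_gt t a).imp (fun h => ⟨hA ht, h⟩) (fun h => ⟨ht, h⟩)
  calc ∫⁻ t in A, g t ∂μ ≤ ∫⁻ t in Ioc 0 a ∪ (A ∩ Ioi a), g t ∂μ := lintegral_mono_set hsplit
    _ ≤ ∫⁻ t in Ioc 0 a, g t ∂μ + ∫⁻ t in A ∩ Ioi a, g t ∂μ := lintegral_union_le _ _ _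
    _ ≤ ∫⁻ t in Ioc 0 a, g t ∂μ + ∫⁻ _ in A ∩ Ioi a, g a ∂μ :=
        add_le_add le_rfl <|
          setLIntegral_mono measurable_const fun t (ht : t ∈ A ∩ Ioi a) => hg t ht.2
    _ ≤ ∫⁻ t in Ioc 0 a, g t ∂μ + g a * μ A := by
        rw [setLIntegral_const]
        gcongr
        exact inter_subset_left

theorem lintegral_Ioc_ofReal_rpow {r : ℝ} (hr : -1 < r) {a : ℝ} (ha : 0 ≤ a) :
    ∫⁻ t in Ioc 0 a, ENNReal.ofReal (t ^ r) = ENNReal.ofReal (a ^ (r + 1) / (r + 1)) := by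
  have hint : IntegrableOn (fun t : ℝ => t ^ r) (Ioc 0 a) := by
    rw [← intervalIntegrable_iff_integrableOn_Ioc_of_le ha]
    exact intervalIntegral.intervalIntegrable_rpow' hr
  rw [← ofReal_integral_eq_lintegral_ofReal hint
    ((ae_restrict_iff' measurableSet_Ioc).mpr (ae_of_all _ fun t ht => rpow_nonneg ht.1.le r)),
    ← intervalIntegral.integral_of_le ha, integral_rpow (Or.inl hr),
    zero_rpow (by linarith), sub_zero]

theorem sinh_le_cosh_mul {a t : ℝ} (ht : 0 ≤ t) (hta : t ≤ a) : sinh t ≤ cosh a * t := by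
  have hmvt := (convex_Icc 0 a).image_sub_le_mul_sub_of_deriv_le continuous_sinh.continuousOn
    differentiable_sinh.differentiableOn (C := cosh a) ?_ 0 ⟨le_rfl, ht.trans hta⟩ t ⟨ht, hta⟩ ht
  · simpa using hmvt
  · intro x hx
    rw [interior_Icc] at hx
    rw [Real.deriv_sinh, cosh_le_cosh, abs_of_pos hx.1, abs_of_pos (hx.1.trans hx.2)]
    exact hx.2.le

section Jacobi

variable {α β : ℝ}

theorem Δj_le_mul_rpow (hα : 0 ≤ 2 * α + 1) (hβ : 0 ≤ 2 * β + 1) {t : ℝ} (ht : t ∈ Ioc 0 1) :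
    Δj α β t ≤ (2 * cosh 1) ^ (2 * α + 2 * β + 2) * t ^ (2 * α + 1) := by
  obtain ⟨ht0, ht1⟩ := ht
  have hsinh : 2 * sinh t ≤ 2 * cosh 1 * t := by linarith [sinh_le_cosh_mul ht0.le ht1]
  have hcosh : 2 * cosh t ≤ 2 * cosh 1 := by
    rw [mul_le_mul_iff_right₀ two_pos, cosh_le_cosh, abs_one, abs_of_pos ht0]
    exact ht1
  have hc : 0 < 2 * cosh 1 := by positivity
  calc Δj α β t ≤ (2 * cosh 1 * t) ^ (2 * α + 1) * (2 * cosh 1) ^ (2 * β + 1) := by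
        unfold Δj
        gcongr
    _ = (2 * cosh 1) ^ (2 * α + 2 * β + 2) * t ^ (2 * α + 1) := by
        rw [mul_rpow hc.le ht0.le, mul_right_comm, ← rpow_add hc]
        ring_nf

theorem setLIntegral_Ioc_rpow_μj_le (hα : 0 ≤ 2 * α + 1) (hβ : 0 ≤ 2 * β + 1) {s a : ℝ}
    (hs : 0 < s + 2 * α + 2) (ha0 : 0 ≤ a) (ha1 : a ≤ 1) :
    ∫⁻ t in Ioc 0 a, ENNReal.ofReal (t ^ s) ∂μj α β
      ≤ ENNReal.ofReal ((2 * cosh 1) ^ (2 * α + 2 * β + 2) *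
          (a ^ (s + 2 * α + 2) / (s + 2 * α + 2))) := by
  set c := (2 * cosh 1) ^ (2 * α + 2 * β + 2)
  have hc : 0 ≤ c := by positivity
  rw [μj, restrict_withDensity measurableSet_Ioc,
    lintegral_withDensity_eq_lintegral_mul _ (by unfold Δj; fun_prop) (by fun_prop)]
  calc ∫⁻ t in Ioc 0 a, ENNReal.ofReal (Δj α β t) * ENNReal.ofReal (t ^ s)
      ≤ ∫⁻ t in Ioc 0 a, ENNReal.ofReal c * ENNReal.ofReal (t ^ (s + 2 * α + 1)) := by
        refine setLIntegral_mono (by fun_prop) fun t ht => ?_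
        rw [← ENNReal.ofReal_mul' (rpow_nonneg ht.1.le s), ← ENNReal.ofReal_mul hc]
        refine ENNReal.ofReal_le_ofReal ?_
        calc Δj α β t * t ^ s ≤ c * t ^ (2 * α + 1) * t ^ s :=
              mul_le_mul_of_nonneg_right (Δj_le_mul_rpow hα hβ ⟨ht.1, ht.2.trans ha1⟩)
                (rpow_nonneg ht.1.le s)
          _ = c * t ^ (s + 2 * α + 1) := by
              rw [mul_assoc, ← rpow_add ht.1]
              ring_nf
    _ = ENNReal.ofReal (c * (a ^ (s + 2 * α + 2) / (s + 2 * α + 2))) := by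
        rw [lintegral_const_mul _ (by fun_prop), lintegral_Ioc_ofReal_rpow (by linarith) ha0,
          ← ENNReal.ofReal_mul hc]
        ring_nf

theorem μj_Ioc_zero_one_lt_top (hα : 0 ≤ 2 * α + 1) (hβ : 0 ≤ 2 * β + 1) :
    μj α β (Ioc 0 1) < ⊤ := by
  have h := setLIntegral_Ioc_rpow_μj_le hα hβ (s := 0) (by linarith) zero_le_one le_rfl
  simp only [rpow_zero, ENNReal.ofReal_one, setLIntegral_const, one_mul] at h
  exact h.trans_lt ENNReal.ofReal_lt_top

theorem setLIntegral_rpow_μj_le (hα : 0 < 2 * α + 1) (hβ : 0 ≤ 2 * β + 1) {A : Set ℝ}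
    (hA : A ⊆ Ioc 0 1) :
    ∫⁻ t in A, ENNReal.ofReal (t ^ (-(α + 1 / 2))) ∂μj α β
      ≤ ENNReal.ofReal ((2 * cosh 1) ^ (2 * α + 2 * β + 2) / (α + 3 / 2) + 1) *
          μj α β A ^ ((2 * α + 3) / (4 * α + 4)) := by
  set c := (2 * cosh 1) ^ (2 * α + 2 * β + 2)
  set q := (2 * α + 3) / (4 * α + 4)
  have hq : 0 < q := div_pos (by linarith) (by linarith)
  have hK : 0 ≤ c / (α + 3 / 2) := div_nonneg (by positivity) (by linarith)
  have hIoc : ∀ a ∈ Ioc (0 : ℝ) 1, ∫⁻ t in Ioc 0 a, ENNReal.ofReal (t ^ (-(α + 1 / 2))) ∂μj α β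
      ≤ ENNReal.ofReal (c / (α + 3 / 2) * a ^ (α + 3 / 2)) := fun a ha => by
    convert setLIntegral_Ioc_rpow_μj_le hα.le hβ (s := -(α + 1 / 2)) (by linarith) ha.1.le ha.2
      using 2
    rw [show -(α + 1 / 2) + 2 * α + 2 = α + 3 / 2 by ring]
    ring
  have hfin : μj α β A ≠ ⊤ := ((measure_mono hA).trans_lt (μj_Ioc_zero_one_lt_top hα.le hβ)).ne
  rcases eq_or_ne (μj α β A) 0 with h0 | h0
  · simp [setLIntegral_measure_zero _ _ h0]
  rcases le_or_gt 1 (μj α β A) with h1 | h1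
  · calc ∫⁻ t in A, ENNReal.ofReal (t ^ (-(α + 1 / 2))) ∂μj α β
        ≤ ∫⁻ t in Ioc 0 1, ENNReal.ofReal (t ^ (-(α + 1 / 2))) ∂μj α β := lintegral_mono_set hA
      _ ≤ ENNReal.ofReal (c / (α + 3 / 2) * 1 ^ (α + 3 / 2)) := hIoc 1 ⟨one_pos, le_rfl⟩
      _ ≤ ENNReal.ofReal (c / (α + 3 / 2) + 1) * 1 := by
          rw [one_rpow, mul_one, mul_one]
          exact ENNReal.ofReal_le_ofReal (by linarith)
      _ ≤ ENNReal.ofReal (c / (α + 3 / 2) + 1) * μj α β A ^ q := by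
          gcongr
          exact ENNReal.one_le_rpow h1 hq
  set m := (μj α β A).toReal
  have hm0 : 0 < m := ENNReal.toReal_pos h0 hfin
  have hm1 : m < 1 := ENNReal.toReal_lt_of_lt_ofReal (by simpa using h1)
  set a := m ^ (1 / (2 * α + 2))
  have ha0 : 0 < a := rpow_pos_of_pos hm0 _
  have hα1 : α + 1 ≠ 0 := by linarith
  have ha1 : a ≤ 1 := rpow_le_one hm0.le hm1.le (div_nonneg zero_le_one (by linarith))
  have hhead : a ^ (α + 3 / 2) = m ^ q := by
    rw [← rpow_mul hm0.le]
    congr 1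
    simp only [q]
    field_simp
    ring
  have htail : ENNReal.ofReal (a ^ (-(α + 1 / 2))) * μj α β A = ENNReal.ofReal (m ^ q) := by
    rw [← ENNReal.ofReal_toReal hfin, ← ENNReal.ofReal_mul (rpow_nonneg ha0.le _),
      ← rpow_mul hm0.le, ← rpow_add_one hm0.ne']
    congr 2
    simp only [q]
    field_simp
    ring
  calc ∫⁻ t in A, ENNReal.ofReal (t ^ (-(α + 1 / 2))) ∂μj α β
      ≤ ∫⁻ t in Ioc 0 a, ENNReal.ofReal (t ^ (-(α + 1 / 2))) ∂μj α β
          + ENNReal.ofReal (a ^ (-(α + 1 / 2))) * μj α β A :=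
        setLIntegral_le_setLIntegral_Ioc_add_mul (hA.trans Ioc_subset_Ioi_self) fun t ht =>
          ENNReal.ofReal_le_ofReal (rpow_le_rpow_of_nonpos ha0 ht.le (by linarith))
    _ ≤ ENNReal.ofReal (c / (α + 3 / 2) * m ^ q) + ENNReal.ofReal (m ^ q) := by
        rw [htail, ← hhead]
        exact add_le_add (hIoc a ⟨ha0, ha1⟩) le_rfl
    _ = ENNReal.ofReal (c / (α + 3 / 2) + 1) * μj α β A ^ q := by
        rw [← ENNReal.ofReal_add (by positivity) (by positivity), ← ENNReal.ofReal_toReal hfin,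
          ENNReal.ofReal_rpow_of_pos hm0, ← ENNReal.ofReal_mul (by positivity)]
        ring_nf

theorem setLIntegral_Ioc_zero_one_rpow_rpow_μj_le (hα : 0 ≤ 2 * α + 1) (hβ : 0 ≤ 2 * β + 1)
    {s p : ℝ} (hp : 0 ≤ p) (hsp : 0 < s * p + 2 * α + 2) :
    ∫⁻ t in Ioc 0 1, ENNReal.ofReal (t ^ s) ^ p ∂μj α β
      ≤ ENNReal.ofReal ((2 * cosh 1) ^ (2 * α + 2 * β + 2) / (s * p + 2 * α + 2)) :=
  calc ∫⁻ t in Ioc 0 1, ENNReal.ofReal (t ^ s) ^ p ∂μj α β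
      = ∫⁻ t in Ioc 0 1, ENNReal.ofReal (t ^ (s * p)) ∂μj α β :=
        setLIntegral_congr_fun measurableSet_Ioc fun t ht => by
          rw [ENNReal.ofReal_rpow_of_nonneg (rpow_nonneg ht.1.le _) hp, ← rpow_mul ht.1.le]
    _ ≤ _ := setLIntegral_Ioc_rpow_μj_le hα hβ hsp zero_le_one le_rfl
    _ = _ := by rw [one_rpow, mul_one_div]

end Jacobi

theorem stmt11 (α β : ℝ) (hβα : β < α) (hβ : -(1/2 : ℝ) < β) :
    ∃ C : ℝ, 0 < C ∧
      ∀ f : ℝ → ℝ, Measurable f → ∀ γ : ℝ, 0 < γ →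
        ENNReal.ofReal γ *
            (μj α β {t : ℝ | t ∈ Set.Ioc (0 : ℝ) 1 ∧
                ENNReal.ofReal γ <
                  ENNReal.ofReal (t ^ (-(α + 1/2))) *
                    ∫⁻ r in Set.Ioc (0 : ℝ) 1,
                      ENNReal.ofReal (r ^ (-(α + 1/2)) * |f r|) ∂(μj α β)}) ^
              (1 / ((4 * α + 4) / (2 * α + 3))) ≤
          ENNReal.ofReal C *
            ∫⁻ s in Set.Ioi (0 : ℝ),
              (μj α β {r : ℝ | r ∈ Set.Ioc (0 : ℝ) 1 ∧ s < |f r|}) ^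
                (1 / ((4 * α + 4) / (2 * α + 3))) := by
  have hα : 0 < 2 * α + 1 := by linarith
  have hβ' : 0 ≤ 2 * β + 1 := by linarith
  set p := (4 * α + 4) / (2 * α + 3)
  have hp : 0 < p := div_pos (by linarith) (by linarith)
  have hsp : -(α + 1 / 2) * p + 2 * α + 2 = p := by
    have : p * (2 * α + 3) = 4 * α + 4 := div_mul_cancel₀ _ (by linarith)
    linear_combination (-1 / 2 : ℝ) * this
  set c := (2 * cosh 1) ^ (2 * α + 2 * β + 2)
  set K := c / (-(α + 1 / 2) * p + 2 * α + 2)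
  have hK : 0 < K := div_pos (by positivity) (by rw [hsp]; exact hp)
  have hM : 0 < c / (α + 3 / 2) + 1 := by
    have : 0 < α + 3 / 2 := by linarith
    positivity
  refine ⟨K ^ (1 / p) * (c / (α + 3 / 2) + 1), mul_pos (rpow_pos_of_pos hK _) hM,
    fun f hf γ _ => ?_⟩
  have hmaj := setLIntegral_mul_le_mul_lintegral_measure_rpow
    (g := fun t => ENNReal.ofReal (t ^ (-(α + 1 / 2)))) (by fun_prop) hf measurableSet_Ioc
    fun A hA _ => setLIntegral_rpow_μj_le hα hβ' hA
  simp only [← ENNReal.ofReal_mul' (abs_nonneg _)] at hmaj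
  rw [← one_div_div (4 * α + 4)] at hmaj
  calc _ ≤ (∫⁻ t in Ioc 0 1, ENNReal.ofReal (t ^ (-(α + 1 / 2))) ^ p ∂μj α β) ^ (1 / p) *
          ∫⁻ r in Ioc 0 1, ENNReal.ofReal (r ^ (-(α + 1 / 2)) * |f r|) ∂μj α β :=
        mul_meas_lt_mul_rpow_le (g := fun t => ENNReal.ofReal (t ^ (-(α + 1 / 2))))
          (by fun_prop) _ hp _ _
    _ ≤ ENNReal.ofReal K ^ (1 / p) * _ := by
        gcongr
        exact setLIntegral_Ioc_zero_one_rpow_rpow_μj_le hα.le hβ' hp.le (by rw [hsp]; exact hp)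
    _ ≤ ENNReal.ofReal K ^ (1 / p) * _ := mul_le_mul_right hmaj _
    _ = _ := by
        rw [ENNReal.ofReal_rpow_of_pos hK, ← mul_assoc, ← ENNReal.ofReal_mul (by positivity)]
end

section
/- Let ρ > 0. There exists a constant C > 0, depending only on ρ, such that for every R > ρ, every real x ≥ 1, and every twice continuously differentiable function G : [ρ,R] → ℂ satisfying |G(λ)| ≤ 1, |G′(λ)| ≤ 1/λ and |G″(λ)| ≤ 1/λ² for all λ ∈ [ρ,R], one has | ∫_ρ^R e^{iλx} G(λ) dλ | ≤ C / x. -/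
/-!
Integrating by parts against the primitive `e^{iλx} / (ix)` gains a factor `1/x`, at the cost of
boundary terms and of the same oscillatory integral with `G` replaced by `G′`. One step is not
enough, since `∫ ‖G′‖ ≤ log (R/ρ)` grows with `R`; after a second step the remainder is bounded
by `∫_ρ^R λ⁻² dλ ≤ 1/ρ`, uniformly in `R`.
-/

open Set intervalIntegral

theorem integral_one_div_sq {a b : ℝ} (ha : 0 < a) (hb : 0 < b) :
    ∫ t in a..b, 1 / t ^ 2 = 1 / a - 1 / b := by
  have h := integral_zpow (a := a) (b := b) (n := -2)
    (Or.inr ⟨by norm_num, notMem_uIcc_of_lt ha hb⟩)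
  simp only [zpow_neg, zpow_ofNat, one_div] at h ⊢
  rw [h]
  norm_num
  ring

section OscillatoryIntegral

open Complex

theorem norm_cexp_I_mul_ofReal_mul_ofReal (t c : ℝ) : ‖cexp (I * t * c)‖ = 1 := by
  simp [Complex.norm_exp]

variable {f f' : ℝ → ℂ} {a b c : ℝ}

theorem integral_cexp_I_mul_mul_eq (hc : c ≠ 0)
    (hf : ∀ t ∈ uIcc a b, HasDerivWithinAt f (f' t) (uIcc a b) t)
    (hf' : IntervalIntegrable f' MeasureTheory.volume a b) :
    ∫ t in a..b, cexp (I * t * c) * f t =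
      (cexp (I * b * c) * f b - cexp (I * a * c) * f a
        - ∫ t in a..b, cexp (I * t * c) * f' t) / (I * c) := by
  have hIc : I * (c : ℂ) ≠ 0 := mul_ne_zero I_ne_zero (ofReal_ne_zero.2 hc)
  have hprim (t : ℝ) :
      HasDerivAt (fun s : ℝ => cexp (I * s * c) / (I * c)) (cexp (I * t * c)) t := by
    simpa [mul_div_assoc, div_self hIc] using
      ((((hasDerivAt_id (t : ℂ)).const_mul I).mul_const (c : ℂ)).cexp.comp_ofReal).div_const
        (I * c)
  have parts := integral_mul_deriv_eq_deriv_mul_of_hasDerivWithinAt hf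
    (fun t _ => (hprim t).hasDerivWithinAt) hf'
    ((by fun_prop : Continuous fun t : ℝ => cexp (I * t * c)).intervalIntegrable a b)
  simp only [mul_div_assoc', intervalIntegral.integral_div] at parts
  simp only [mul_comm (cexp _)]
  rw [parts]
  ring

theorem norm_integral_cexp_I_mul_mul_le (hc : c ≠ 0)
    (hf : ∀ t ∈ uIcc a b, HasDerivWithinAt f (f' t) (uIcc a b) t)
    (hf' : IntervalIntegrable f' MeasureTheory.volume a b) :
    ‖∫ t in a..b, cexp (I * t * c) * f t‖ ≤
      (‖f a‖ + ‖f b‖ + ‖∫ t in a..b, cexp (I * t * c) * f' t‖) / |c| := by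
  rw [integral_cexp_I_mul_mul_eq hc hf hf', norm_div, norm_mul, norm_I, one_mul, norm_real,
    Real.norm_eq_abs]
  gcongr
  grw [norm_sub_le, norm_sub_le]
  simp only [norm_mul, norm_cexp_I_mul_ofReal_mul_ofReal, one_mul]
  linarith

theorem norm_integral_cexp_I_mul_mul_le_of_contDiffOn (hab : a < b) (hc : c ≠ 0)
    (hf : ContDiffOn ℝ 1 f (Icc a b)) :
    ‖∫ t in a..b, cexp (I * t * c) * f t‖ ≤
      (‖f a‖ + ‖f b‖ + ‖∫ t in a..b, cexp (I * t * c) * derivWithin f (Icc a b) t‖) / |c| := by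
  have hs : uIcc a b = Icc a b := uIcc_of_le hab.le
  refine norm_integral_cexp_I_mul_mul_le hc ?_ ?_
  · rw [hs]
    exact fun t ht => ((hf.differentiableOn one_ne_zero) t ht).hasDerivWithinAt
  · apply ContinuousOn.intervalIntegrable
    rw [hs]
    exact hf.continuousOn_derivWithin (uniqueDiffOn_Icc hab) le_rfl

theorem norm_integral_cexp_I_mul_mul_le_one_div (ha : 0 < a) (hab : a ≤ b)
    (hf : ∀ t ∈ Icc a b, ‖f t‖ ≤ 1 / t ^ 2) :
    ‖∫ t in a..b, cexp (I * t * c) * f t‖ ≤ 1 / a := calc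
  _ ≤ ∫ t in a..b, 1 / t ^ 2 := by
    refine norm_integral_le_of_norm_le hab (Filter.Eventually.of_forall fun t ht => ?_) ?_
    · rw [norm_mul, norm_cexp_I_mul_ofReal_mul_ofReal, one_mul]
      exact hf t (Ioc_subset_Icc_self ht)
    · apply ContinuousOn.intervalIntegrable
      rw [uIcc_of_le hab]
      exact continuousOn_const.div (continuousOn_pow 2)
        fun t ht => (pow_pos (ha.trans_le ht.1) 2).ne'
  _ = 1 / a - 1 / b := integral_one_div_sq ha (ha.trans_le hab)
  _ ≤ 1 / a := by linarith [one_div_pos.2 (ha.trans_le hab)]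

end OscillatoryIntegral

theorem stmt15 (ρ : ℝ) (hρ : 0 < ρ) :
    ∃ C : ℝ, 0 < C ∧
      ∀ R : ℝ, ρ < R → ∀ x : ℝ, 1 ≤ x → ∀ G : ℝ → ℂ,
        ContDiffOn ℝ 2 G (Set.Icc ρ R) →
        (∀ l ∈ Set.Icc ρ R, ‖G l‖ ≤ 1) →
        (∀ l ∈ Set.Icc ρ R, ‖derivWithin G (Set.Icc ρ R) l‖ ≤ 1 / l) →
        (∀ l ∈ Set.Icc ρ R,
          ‖derivWithin (derivWithin G (Set.Icc ρ R)) (Set.Icc ρ R) l‖ ≤ 1 / l ^ 2) →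
        ‖∫ l in ρ..R, Complex.exp (Complex.I * (l : ℂ) * (x : ℂ)) * G l‖ ≤ C / x := by
  refine ⟨2 + 3 / ρ, by positivity, fun R hR x hx G hG hG0 hG1 hG2 => ?_⟩
  have hx0 : 0 < x := one_pos.trans_le hx
  have hρs : ρ ∈ Icc ρ R := left_mem_Icc.2 hR.le
  have hRs : R ∈ Icc ρ R := right_mem_Icc.2 hR.le
  have hG' : ContDiffOn ℝ 1 (derivWithin G (Icc ρ R)) (Icc ρ R) :=
    hG.derivWithin (uniqueDiffOn_Icc hR) le_rfl
  have hG'R : ‖derivWithin G (Icc ρ R) R‖ ≤ 1 / ρ :=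
    (hG1 R hRs).trans (one_div_le_one_div_of_le hρ hR.le)
  have hJ : ‖∫ l in ρ..R, Complex.exp (Complex.I * l * x) * derivWithin G (Icc ρ R) l‖
      ≤ 3 / ρ := calc
    _ ≤ (1 / ρ + 1 / ρ + 1 / ρ) / x := by
      grw [norm_integral_cexp_I_mul_mul_le_of_contDiffOn hR hx0.ne' hG',
        norm_integral_cexp_I_mul_mul_le_one_div hρ hR.le hG2, hG1 ρ hρs, hG'R, abs_of_pos hx0]
    _ ≤ 1 / ρ + 1 / ρ + 1 / ρ := div_le_self (by positivity) hx
    _ = 3 / ρ := by ring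
  calc _ ≤ (1 + 1 + 3 / ρ) / x := by
        grw [norm_integral_cexp_I_mul_mul_le_of_contDiffOn hR hx0.ne' (hG.of_le one_le_two),
          hG0 ρ hρs, hG0 R hRs, hJ, abs_of_pos hx0]
    _ = (2 + 3 / ρ) / x := by ring
end
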